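/- Let x ∈ ℝⁿ and δ > 0. Suppose f : ℝⁿ → ℝ is differentiable with L-Lipschitz continuous gradient, m : ℝⁿ → ℝ is differentiable at x, the curvature bound |m(x+s) − m(x) − ⟨∇m(x), s⟩| ≤ ((κ_bmh − 1)/2)·‖s‖² holds for all s with ‖s‖ ≤ δ, and the gradient-accuracy bound ‖∇m(x) − ∇f(x)‖ ≤ κ_grad·δ holds. Then for every s ∈ ℝⁿ with ‖s‖ ≤ δ, f(x+s) − m(x+s) − f(x) + m(x) ≤ 2·κ_val·δ², where κ_val := (L + κ_bmh + 2·κ_grad)/4. -/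

import Mathlib

/-!
`f (x + s) - m (x + s) - f x + m x` splits into the first-order Taylor remainder of `f`
(at most `L/2 ‖s‖²` by the descent lemma), minus that of `m` (at least `-(κbmh - 1)/2 ‖s‖²`
by the curvature bound), plus `⟪∇f x - ∇m x, s⟫ ≤ κgrad δ²`; with `‖s‖ ≤ δ` the three
bounds add up to `(L + κbmh - 1)/2 δ² + κgrad δ²`, within the claimed bound.
-/

open RealInnerProductSpace

section DescentLemma

variable {E : Type*} [NormedAddCommGroup E] [InnerProductSpace ℝ E] [CompleteSpace E]
  {f : E → ℝ} {L : ℝ}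

theorem hasDerivAt_comp_add_smul_of_differentiable (hf : Differentiable ℝ f) (x s : E) (t : ℝ) :
    HasDerivAt (fun t : ℝ => f (x + t • s)) ⟪gradient f (x + t • s), s⟫ t := by
  have hline : HasDerivAt (fun t : ℝ => x + t • s) s t := by
    simpa using ((hasDerivAt_id t).smul_const s).const_add x
  simpa [Function.comp_def] using
    (hf (x + t • s)).hasGradientAt.hasFDerivAt.comp_hasDerivAt t hline

/-- `t ↦ f (x + t • s) - t ⟪∇f x, s⟫ - L/2 t² ‖s‖²` has derivative
`⟪∇f (x + t • s) - ∇f x, s⟫ - L t ‖s‖² ≤ 0` for `t ≥ 0`, hence is antitone. -/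
theorem sub_sub_inner_gradient_le_of_lipschitz_gradient (hf : Differentiable ℝ f) (x : E)
    (hL : ∀ y, ‖gradient f y - gradient f x‖ ≤ L * ‖y - x‖) (s : E) :
    f (x + s) - f x - ⟪gradient f x, s⟫ ≤ L / 2 * ‖s‖ ^ 2 := by
  set g : ℝ → ℝ := fun t => f (x + t • s) - t * ⟪gradient f x, s⟫ - L / 2 * t ^ 2 * ‖s‖ ^ 2
  have hg : ∀ t, HasDerivAt g
      (⟪gradient f (x + t • s), s⟫ - ⟪gradient f x, s⟫ - L * t * ‖s‖ ^ 2) t := by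
    intro t
    refine (((hasDerivAt_comp_add_smul_of_differentiable hf x s t).sub
      ((hasDerivAt_id t).mul_const ⟪gradient f x, s⟫)).sub
      (((hasDerivAt_pow 2 t).const_mul (L / 2)).mul_const (‖s‖ ^ 2))).congr_deriv ?_
    ring
  have hg_nonpos : ∀ t : ℝ, 0 ≤ t →
      ⟪gradient f (x + t • s), s⟫ - ⟪gradient f x, s⟫ - L * t * ‖s‖ ^ 2 ≤ 0 := by
    intro t ht
    have : ⟪gradient f (x + t • s) - gradient f x, s⟫ ≤ L * t * ‖s‖ ^ 2 :=
      calc ⟪gradient f (x + t • s) - gradient f x, s⟫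
          ≤ ‖gradient f (x + t • s) - gradient f x‖ * ‖s‖ := real_inner_le_norm _ _
        _ ≤ L * ‖x + t • s - x‖ * ‖s‖ := by gcongr; exact hL _
        _ = L * t * ‖s‖ ^ 2 := by
          rw [add_sub_cancel_left, norm_smul, Real.norm_of_nonneg ht]; ring
    rw [inner_sub_left] at this
    linarith
  have hanti : AntitoneOn g (Set.Ici 0) :=
    antitoneOn_of_hasDerivWithinAt_nonpos (convex_Ici 0)
      (fun t _ => (hg t).continuousAt.continuousWithinAt)
      (fun t _ => (hg t).hasDerivWithinAt)
      (fun t ht => hg_nonpos t (interior_subset ht))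
  have h01 : g 1 ≤ g 0 := hanti (Set.mem_Ici.2 le_rfl) (Set.mem_Ici.2 zero_le_one) zero_le_one
  simp only [g, one_smul, zero_smul, add_zero] at h01
  linarith

end DescentLemma

theorem stmt_0 {n : ℕ} (x : EuclideanSpace ℝ (Fin n)) (δ L κbmh κgrad : ℝ)
    (hL : 0 < L) (hκbmh : 1 ≤ κbmh)
    (f m : EuclideanSpace ℝ (Fin n) → ℝ)
    (hf : Differentiable ℝ f)
    (hflip : ∀ a b : EuclideanSpace ℝ (Fin n),
      ‖gradient f b - gradient f a‖ ≤ L * ‖b - a‖)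
    (hcurv : ∀ s : EuclideanSpace ℝ (Fin n), ‖s‖ ≤ δ →
      |m (x + s) - m x - ⟪gradient m x, s⟫| ≤ ((κbmh - 1) / 2) * ‖s‖ ^ 2)
    (hgrad : ‖gradient m x - gradient f x‖ ≤ κgrad * δ) :
    ∀ s : EuclideanSpace ℝ (Fin n), ‖s‖ ≤ δ →
      f (x + s) - m (x + s) - f x + m x ≤
        2 * ((L + κbmh + 2 * κgrad) / 4) * δ ^ 2 := by
  intro s hs
  have hf_descent := sub_sub_inner_gradient_le_of_lipschitz_gradient hf x (hflip x) s
  have hm_curv := neg_le_of_abs_le (hcurv s hs)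
  have hδ : 0 ≤ δ := (norm_nonneg s).trans hs
  have hinner : ⟪gradient f x - gradient m x, s⟫ ≤ κgrad * δ * δ :=
    calc ⟪gradient f x - gradient m x, s⟫
        ≤ ‖gradient m x - gradient f x‖ * ‖s‖ := by
          rw [← norm_neg, neg_sub]; exact real_inner_le_norm _ _
      _ ≤ κgrad * δ * δ := by gcongr; exact (norm_nonneg _).trans hgrad
  have hquad : (L + κbmh - 1) / 2 * ‖s‖ ^ 2 ≤ (L + κbmh - 1) / 2 * δ ^ 2 := by
    gcongr
    linarith
  rw [inner_sub_left] at hinner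
  linarith [sq_nonneg δ]
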